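/- A vector (x, y, z) ∈ ℤ³ is a non-negative integer combination of the four vectors (1,0,0), (0,1,0), (0,0,1), (3,−1,1) if and only if x ≥ 0, z ≥ 0, y + z ≥ 0, and x + 3y ≥ 0. -/

import Mathlib

/-!
Each generator satisfies the four inequalities, which are linear, so every non-negative combination
does. Conversely, take `d = max 0 (-y)` copies of `(3, -1, 1)`: what remains is
`(x - 3d, y + d, z - d)`, whose coordinates are non-negative exactly because of the inequalities
(`x + 3y ≥ 0` and `y + z ≥ 0` are needed only when `y < 0`).
-/

lemma combination_eq (a b c d : ℕ) :
    a • ((1 : ℤ), (0 : ℤ), (0 : ℤ)) + b • ((0 : ℤ), (1 : ℤ), (0 : ℤ)) +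
        c • ((0 : ℤ), (0 : ℤ), (1 : ℤ)) + d • ((3 : ℤ), (-1 : ℤ), (1 : ℤ)) =
      ((a + 3 * d : ℤ), (b - d : ℤ), (c + d : ℤ)) := by
  simp only [Prod.smul_mk, Prod.mk_add_mk, nsmul_eq_mul]
  ext <;> simp only [mul_one, mul_zero, mul_neg] <;> ring

/-- `(x,y,z) ∈ ℤ³` is a non-negative integer combination of
`(1,0,0), (0,1,0), (0,0,1), (3,−1,1)` iff `x ≥ 0`, `z ≥ 0`, `y + z ≥ 0` and
`x + 3y ≥ 0`. -/
theorem hilbert_basis_V3165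
    (x y z : ℤ) :
    (∃ a b c d : ℕ,
      (x, y, z) =
        a • ((1 : ℤ), (0 : ℤ), (0 : ℤ)) + b • ((0 : ℤ), (1 : ℤ), (0 : ℤ)) +
        c • ((0 : ℤ), (0 : ℤ), (1 : ℤ)) + d • ((3 : ℤ), (-1 : ℤ), (1 : ℤ))) ↔
      (0 ≤ x ∧ 0 ≤ z ∧ 0 ≤ y + z ∧ 0 ≤ x + 3 * y) := by
  simp only [combination_eq, Prod.mk.injEq]
  constructor
  · rintro ⟨a, b, c, d, rfl, rfl, rfl⟩
    omega
  · rintro ⟨hx, hz, hyz, hxy⟩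
    obtain ⟨d, hd⟩ : ∃ d : ℕ, (d : ℤ) = max 0 (-y) := ⟨(-y).toNat, by omega⟩
    refine ⟨(x - 3 * d).toNat, (y + d).toNat, (z - d).toNat, d, ?_, ?_, ?_⟩ <;> omega
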